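/- Define w(x) = 1.8·x + 0.15 if x > 1/2 and w(x) = 1.8·x otherwise, for x ∈ [0,1]. Then for any finite multiset B of reals in [0,1] with total sum at most 1, the total weight ∑_{x∈B} w(x) is at most 1.95. -/

import Mathlib

/-! The weight is `1.8 x` plus a bonus of `0.15` for each large item. Since the items are
nonnegative and sum to at most `1`, at most one of them exceeds `1/2`, so the total weight is at
most `1.8 · 1 + 0.15`. -/

noncomputable def w0 (x : ℝ) : ℝ := 1.8 * x + if x > 1/2 then 0.15 else 0

theorem Multiset.sum_map_ite_zero {α M : Type*} [AddCommMonoid M] (p : α → Prop)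
    [DecidablePred p] (c : M) (s : Multiset α) :
    (s.map fun x => if p x then c else 0).sum = (s.filter p).card • c := by
  induction s using Multiset.induction with
  | empty => simp
  | cons a s ih => by_cases h : p a <;> simp [h, ih, add_nsmul, add_comm]

theorem Multiset.card_filter_lt_le_one_of_sum_le {s : Multiset ℝ} {t : ℝ}
    (hs : ∀ x ∈ s, 0 ≤ x) (hsum : s.sum ≤ 2 * t) : (s.filter (t < ·)).card ≤ 1 := by
  set L := s.filter (t < ·)
  by_cases hL : L = 0
  · simp [hL]
  have hlt : L.card * t < L.sum := by
    simpa using Multiset.sum_lt_sum_of_nonempty (f := fun _ => t) (g := id) hL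
      fun x hx => (Multiset.mem_filter.1 hx).2
  have hle : L.sum ≤ s.sum := by
    rw [← Multiset.sum_filter_add_sum_filter_not (t < ·) (s := s)]
    exact le_add_of_nonneg_right
      (Multiset.sum_nonneg fun x hx => hs x (Multiset.mem_of_mem_filter hx))
  have ht : 0 ≤ t := by linarith [Multiset.sum_nonneg hs]
  have hcard : (L.card : ℝ) < 2 := by nlinarith
  exact Nat.lt_succ_iff.1 (by exact_mod_cast hcard)

theorem sum_map_w0 (B : Multiset ℝ) :
    (B.map w0).sum = 1.8 * B.sum + (B.filter (1/2 < ·)).card * 0.15 := by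
  unfold w0
  rw [Multiset.sum_map_add, Multiset.sum_map_mul_left, Multiset.map_id',
    Multiset.sum_map_ite_zero, nsmul_eq_mul]

theorem stmt0 (B : Multiset ℝ) (hB : ∀ x ∈ B, 0 ≤ x ∧ x ≤ 1)
    (hsum : B.sum ≤ 1) : (B.map w0).sum ≤ 1.95 := by
  have hlarge : ((B.filter (1/2 < ·)).card : ℝ) ≤ 1 := by
    exact_mod_cast Multiset.card_filter_lt_le_one_of_sum_le (fun x hx => (hB x hx).1)
      (by linarith)
  calc (B.map w0).sum = 1.8 * B.sum + (B.filter (1/2 < ·)).card * 0.15 := sum_map_w0 B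
    _ ≤ 1.8 * 1 + 1 * 0.15 := by gcongr
    _ = 1.95 := by norm_num
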